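/- Co-intersectability is strictly stronger than the conjunction of intersectability and the RVE existence condition: there exists a relational schema S and valid relational paths Q, R, P, P′ of a common perspective B such that (1) P ∈ extend(Q,R), i.e., ∃σ ∃b ∃i_j ∈ Q|_b with R|_{i_j} ∩ P|_b ≠ ∅; (2) P and P′ are intersectable, i.e., ∃σ ∃b with P|_b ∩ P′|_b ≠ ∅; but (3) ⟨Q,R,P,P′⟩ is not co-intersectable, i.e., for all σ ∈ Σ_S, all b ∈ σ(B), and all i_j ∈ Q|_b, R|_{i_j} ∩ P|_b ∩ P′|_b = ∅. -/

import Mathlib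

/-- Kinds of item classes in a relational schema. -/
inductive ItemKind | entity | relationship
deriving DecidableEq

/-- Cardinalities. -/
inductive Card | one | many
deriving DecidableEq

/-- A relational schema: item classes with kinds, participation of entity
classes in relationship classes, and a cardinality function `card R E`. -/
structure Schema where
  Class : Type
  kind : Class → ItemKind
  participates : Class → Class → Prop   -- `participates E R`
  card : Class → Class → Card           -- `card R E`

namespace Schema

/-- Condition (1) of relational paths: alternation between entity and
relationship classes, with participation at each consecutive pair. -/
def Alternates (S : Schema) (P : List S.Class) : Prop :=
  ∀ i a b, P[i]? = some a → P[i+1]? = some b →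
    ((S.kind a = .entity ∧ S.kind b = .relationship ∧ S.participates a b) ∨
     (S.kind a = .relationship ∧ S.kind b = .entity ∧ S.participates b a))

/-- Condition (2): in every subsequence `[E, R, E']`, `E ≠ E'`. -/
def NoERE (S : Schema) (P : List S.Class) : Prop :=
  ∀ i a b c, P[i]? = some a → P[i+1]? = some b → P[i+2]? = some c →
    S.kind a = .entity → a ≠ c

/-- Condition (3): in every subsequence `[R, E, R']` with `R = R'`,
`card (R, E) = many`. -/
def CardMany (S : Schema) (P : List S.Class) : Prop :=
  ∀ i a b c, P[i]? = some a → P[i+1]? = some b → P[i+2]? = some c →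
    S.kind a = .relationship → a = c → S.card a b = .many

/-- A valid relational path. -/
def ValidPath (S : Schema) (P : List S.Class) : Prop :=
  P ≠ [] ∧ S.Alternates P ∧ S.NoERE P ∧ S.CardMany P

end Schema

/-- A relational skeleton instantiating a schema: items with classes and a
symmetric adjacency relation, respecting participation and cardinality
constraints (`card = one` forces at most one adjacent relationship instance;
relationship instances have exactly one adjacent entity instance per
participating entity class). -/
structure Skeleton (S : Schema) where
  Item : Type
  classOf : Item → S.Class
  adj : Item → Item → Prop
  adj_symm : ∀ {i j}, adj i j → adj j i
  adj_alt : ∀ {i j}, adj i j →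
    (S.kind (classOf i) = .entity ∧ S.kind (classOf j) = .relationship ∧
      S.participates (classOf i) (classOf j)) ∨
    (S.kind (classOf i) = .relationship ∧ S.kind (classOf j) = .entity ∧
      S.participates (classOf j) (classOf i))
  card_one : ∀ {e r r'}, S.kind (classOf e) = .entity →
    S.card (classOf r) (classOf e) = .one → classOf r = classOf r' →
    adj e r → adj e r' → r = r'
  rel_unique : ∀ {r i j}, S.kind (classOf r) = .relationship →
    adj r i → adj r j → classOf i = classOf j → i = j
  rel_total : ∀ {r E}, S.kind (classOf r) = .relationship →
    S.participates E (classOf r) → ∃ e, classOf e = E ∧ adj r e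

namespace Skeleton

variable {S : Schema} (σ : Skeleton S)

/-- Auxiliary recursion for terminal sets under bridge burning semantics:
`(tsetAux P b ℓ).1` is the terminal set `P^{1:ℓ+1}|_b` (0-indexed `ℓ`) and
`(tsetAux P b ℓ).2` is the set of all items visited up to step `ℓ`. -/
def tsetAux (P : List S.Class) (b : σ.Item) : ℕ → Set σ.Item × Set σ.Item
  | 0 => ({b}, {b})
  | ℓ+1 =>
      let prev := tsetAux P b ℓ
      let cur : Set σ.Item :=
        {i | P[ℓ+1]? = some (σ.classOf i) ∧ (∃ j ∈ prev.1, σ.adj i j) ∧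
             i ∉ prev.2}
      (cur, prev.2 ∪ cur)

/-- The terminal set `P^{1:ℓ+1}|_b` (so `ℓ` is 0-indexed: `tset P b 0 = {b}`). -/
def tset (P : List S.Class) (b : σ.Item) (ℓ : ℕ) : Set σ.Item :=
  (σ.tsetAux P b ℓ).1

/-- The (full) terminal set `P|_b`. -/
def tfull (P : List S.Class) (b : σ.Item) : Set σ.Item :=
  σ.tset P b (P.length - 1)

end Skeleton

/-- Item classes of the co-intersectability counterexample schema. -/
inductive C10 | Ij | Ik | B | E1 | E2 | E3 | R1 | R2 | R3 | R4 | R5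
deriving DecidableEq

open C10 in
/-- The counterexample schema: `R1=⟨B,E1⟩`, `R2=⟨E1,E3⟩`, `R3=⟨E1,E2⟩`,
`R4=⟨E2,E3,Ik⟩`, `R5=⟨Ik,Ij⟩`, with all cardinalities `one`. -/
def S10 : Schema where
  Class := C10
  kind := fun c => match c with
    | R1 | R2 | R3 | R4 | R5 => .relationship
    | _ => .entity
  participates := fun e r =>
    (e, r) ∈ ([(B,R1),(E1,R1),(E1,R2),(E3,R2),(E1,R3),(E2,R3),
               (E2,R4),(E3,R4),(Ik,R4),(Ik,R5),(Ij,R5)] : List (C10 × C10))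
  card := fun _ _ => .one

open C10 in
def Q10 : List C10 := [B,R1,E1,R2,E3,R4,Ik,R5,Ij]
open C10 in
def R10 : List C10 := [Ij,R5,Ik,R4,E3,R2,E1,R3,E2,R4,Ik]
open C10 in
def P10 : List C10 := [B,R1,E1,R3,E2,R4,Ik]
open C10 in
def P10' : List C10 := [B,R1,E1,R2,E3,R4,Ik]

/-!
When every cardinality is one, an item has at most one neighbour of each class. Hence terminal
sets are subsingletons, and following a path backwards from the end of a terminal set retraces
it. So from `i_j ∈ Q|_b` the path `R` first retraces `Q` back to its `R₄`-instance `r`, and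
`P′|_b = Q^{1:7}|_b` is the `I_k`-instance adjacent to `r`. An item of `R|_{i_j} ∩ P′|_b` would be
reached by `R` through an `R₄`-neighbour, which must again be `r`: a bridge `R` has already burnt.
The positive parts are witnessed by finite skeletons, in which an injective walk whose classes
spell out a path ends in that path's terminal set.
-/

namespace Skeleton

variable {S : Schema} (σ : Skeleton S) {P P' : List S.Class} {b : σ.Item}

theorem mem_tset_succ {i : σ.Item} {k : ℕ} :
    i ∈ σ.tset P b (k + 1) ↔ P[k + 1]? = some (σ.classOf i) ∧
      (∃ j ∈ σ.tset P b k, σ.adj i j) ∧ i ∉ (σ.tsetAux P b k).2 :=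
  Iff.rfl

theorem mem_tsetAux_snd_iff {i : σ.Item} {k : ℕ} :
    i ∈ (σ.tsetAux P b k).2 ↔ ∃ m ≤ k, i ∈ σ.tset P b m := by
  induction k with
  | zero => simp only [Nat.le_zero, exists_eq_left]; rfl
  | succ k ih =>
    change i ∈ (σ.tsetAux P b k).2 ∪ σ.tset P b (k + 1) ↔ _
    rw [Set.mem_union, ih]
    constructor
    · rintro (⟨m, hm, h⟩ | h)
      · exact ⟨m, by omega, h⟩
      · exact ⟨k + 1, le_rfl, h⟩
    · rintro ⟨m, hm, h⟩
      rcases Nat.lt_or_eq_of_le hm with hm | rfl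
      · exact Or.inl ⟨m, by omega, h⟩
      · exact Or.inr h

theorem notMem_tset_of_mem_tset_succ {i : σ.Item} {k m : ℕ}
    (hi : i ∈ σ.tset P b (k + 1)) (hm : m ≤ k) : i ∉ σ.tset P b m :=
  fun h => ((σ.mem_tset_succ).1 hi).2.2 ((σ.mem_tsetAux_snd_iff).2 ⟨m, hm, h⟩)

theorem tset_nonempty_of_le {k n : ℕ} (hn : (σ.tset P b n).Nonempty) (hk : k ≤ n) :
    (σ.tset P b k).Nonempty := by
  induction n, hk using Nat.le_induction with
  | base => exact hn
  | succ n _ ih =>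
    obtain ⟨i, hi⟩ := hn
    obtain ⟨-, ⟨j, hj, -⟩, -⟩ := (σ.mem_tset_succ).1 hi
    exact ih ⟨j, hj⟩

theorem tsetAux_congr {k : ℕ} (h : ∀ m ≤ k, P[m]? = P'[m]?) :
    σ.tsetAux P b k = σ.tsetAux P' b k := by
  induction k with
  | zero => rfl
  | succ k ih =>
    simp only [tsetAux, ih fun m hm => h m (by omega), h (k + 1) le_rfl]

theorem tset_congr {k : ℕ} (h : ∀ m ≤ k, P[m]? = P'[m]?) :
    σ.tset P b k = σ.tset P' b k :=
  congrArg Prod.fst (σ.tsetAux_congr h)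

theorem eq_of_adj_of_classOf_eq (hS : ∀ R E, S.card R E = .one) {x y y' : σ.Item}
    (hy : σ.adj x y) (hy' : σ.adj x y') (h : σ.classOf y = σ.classOf y') : y = y' := by
  rcases σ.adj_alt hy with ⟨hx, -, -⟩ | ⟨hx, -, -⟩
  · exact σ.card_one hx (hS _ _) h hy hy'
  · exact σ.rel_unique hx hy hy' h

theorem tset_subsingleton (hS : ∀ R E, S.card R E = .one) (P : List S.Class) (b : σ.Item)
    (k : ℕ) : (σ.tset P b k).Subsingleton := by
  induction k with
  | zero => exact Set.subsingleton_singleton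
  | succ k ih =>
    intro i hi i' hi'
    obtain ⟨hc, ⟨j, hj, hij⟩, -⟩ := (σ.mem_tset_succ).1 hi
    obtain ⟨hc', ⟨j', hj', hij'⟩, -⟩ := (σ.mem_tset_succ).1 hi'
    obtain rfl := ih hj hj'
    exact σ.eq_of_adj_of_classOf_eq hS (σ.adj_symm hij) (σ.adj_symm hij')
      (Option.some.inj (hc.symm.trans hc'))

theorem getElem_mem_tset_of_isChain (hS : ∀ R E, S.card R E = .one) {w : List σ.Item}
    (hP : (b :: w).map σ.classOf = P) (hw : (b :: w).IsChain σ.adj) (hnd : (b :: w).Nodup)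
    (k : ℕ) (hk : k < (b :: w).length) : (b :: w)[k] ∈ σ.tset P b k := by
  induction k using Nat.strong_induction_on with
  | _ k ih =>
  cases k with
  | zero => rfl
  | succ k =>
    have hprev : ∀ m (hm : m ≤ k), σ.tset P b m = {(b :: w)[m]'(by omega)} := fun m hm =>
      (σ.tset_subsingleton hS P b m).eq_singleton_of_mem (ih m (by omega) (by omega))
    have hclass : P[k + 1]? = some (σ.classOf (b :: w)[k + 1]) := by
      rw [← hP, List.getElem?_map, List.getElem?_eq_getElem hk]; rfl
    refine (σ.mem_tset_succ).2
      ⟨hclass, ⟨_, ih k (by omega) (by omega), σ.adj_symm (hw.getElem k hk)⟩, fun hv => ?_⟩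
    obtain ⟨m, hm, hmem⟩ := (σ.mem_tsetAux_snd_iff).1 hv
    rw [hprev m hm, Set.mem_singleton_iff, hnd.getElem_inj_iff] at hmem
    omega

theorem getLast_mem_tfull_of_isChain (hS : ∀ R E, S.card R E = .one) {w : List σ.Item}
    (hP : (b :: w).map σ.classOf = P) (hw : (b :: w).IsChain σ.adj) (hnd : (b :: w).Nodup) :
    (b :: w).getLast (List.cons_ne_nil b w) ∈ σ.tfull P b := by
  have hlen : P.length = (b :: w).length := by rw [← hP, List.length_map]
  rw [List.getLast_eq_getElem, tfull, hlen]
  exact σ.getElem_mem_tset_of_isChain hS hP hw hnd _ _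

theorem mem_tset_of_mem_tset_reverse (hS : ∀ R E, S.card R E = .one) {R : List S.Class}
    {i x : σ.Item} {n l : ℕ} (hi : i ∈ σ.tset P b n) (hl : l < n)
    (hR : ∀ t ≤ l, R[t]? = P[n - t]?) (hx : x ∈ σ.tset R i l) :
    x ∈ σ.tset P b (n - l) := by
  -- `l < n` because `P[0]` does not constrain the class of `b`
  induction l generalizing x with
  | zero => exact (hx : x = i) ▸ hi
  | succ l ih =>
    obtain ⟨m, hm⟩ : ∃ m, n - l = m + 2 := ⟨n - l - 2, by omega⟩
    obtain ⟨hcx, ⟨y, hy, hxy⟩, -⟩ := (σ.mem_tset_succ).1 hx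
    have hy' : y ∈ σ.tset P b (m + 2) := hm ▸ ih (by omega) (fun t ht => hR t (by omega)) hy
    obtain ⟨-, ⟨x', hx', hyx'⟩, -⟩ := (σ.mem_tset_succ).1 hy'
    obtain ⟨hcx', -, -⟩ := (σ.mem_tset_succ).1 hx'
    rw [show n - (l + 1) = m + 1 by omega]
    rw [hR (l + 1) le_rfl, show n - (l + 1) = m + 1 by omega, hcx'] at hcx
    obtain rfl := σ.eq_of_adj_of_classOf_eq hS (σ.adj_symm hxy) hyx' (Option.some.inj hcx).symm
    exact hx'

end Skeleton

theorem S10_card_eq_one : ∀ R E, S10.card R E = .one := fun _ _ => rfl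

instance : Fintype C10 :=
  .ofList [.Ij, .Ik, .B, .E1, .E2, .E3, .R1, .R2, .R3, .R4, .R5] (by intro x; cases x <;> decide)

inductive ExtendItem
  | b | r1 | e1 | r2 | e3 | r3 | e2 | r4 | e2' | ik | r5 | ij | r4' | e3' | ik'
deriving DecidableEq

open ExtendItem in
instance : Fintype ExtendItem :=
  .ofList [b, r1, e1, r2, e3, r3, e2, r4, e2', ik, r5, ij, r4', e3', ik']
    (by intro x; cases x <;> decide)

open C10 in
def ExtendItem.classOf : ExtendItem → C10
  | b => B | r1 => R1 | e1 => E1 | r2 => R2 | e3 => E3 | r3 => R3 | e2 => E2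
  | r4 => R4 | e2' => E2 | ik => Ik | r5 => R5 | ij => Ij | r4' => R4 | e3' => E3 | ik' => Ik

-- `r4` gets its own `E2`-participant `e2'`, so that `R` can leave `e2` through a second
-- `R4`-instance `r4'` instead of the bridge `r4` it has already burnt.
open ExtendItem in
def ExtendItem.Adj (i j : ExtendItem) : Prop :=
  (i, j) ∈ edges ∨ (j, i) ∈ edges
where edges : List (ExtendItem × ExtendItem) :=
  [(r1, b), (r1, e1), (r2, e1), (r2, e3), (r3, e1), (r3, e2),
   (r4, e2'), (r4, e3), (r4, ik), (r5, ik), (r5, ij), (r4', e2), (r4', e3'), (r4', ik')]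

instance : DecidableRel ExtendItem.Adj := fun _ _ => by unfold ExtendItem.Adj; infer_instance

@[reducible]
def extendSkeleton : Skeleton S10 where
  Item := ExtendItem
  classOf := ExtendItem.classOf
  adj := ExtendItem.Adj
  adj_symm := by decide
  adj_alt := by unfold S10; decide
  card_one := by unfold S10; decide
  rel_unique := by unfold S10; decide
  rel_total := by unfold S10; decide

open ExtendItem in
theorem exists_extend_witness : ∃ (σ : Skeleton S10) (b : σ.Item), σ.classOf b = C10.B ∧
    ∃ ij ∈ σ.tfull Q10 b, (σ.tfull R10 ij ∩ σ.tfull P10 b).Nonempty := by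
  refine ⟨extendSkeleton, b, rfl, ij, ?_, ik', ?_, ?_⟩
  · exact extendSkeleton.getLast_mem_tfull_of_isChain S10_card_eq_one
      (w := [r1, e1, r2, e3, r4, ik, r5, ij]) rfl (by decide) (by decide)
  · exact extendSkeleton.getLast_mem_tfull_of_isChain S10_card_eq_one
      (w := [r5, ik, r4, e3, r2, e1, r3, e2, r4', ik']) rfl (by decide) (by decide)
  · exact extendSkeleton.getLast_mem_tfull_of_isChain S10_card_eq_one
      (w := [r1, e1, r3, e2, r4', ik']) rfl (by decide) (by decide)

inductive IntersectItem
  | b | r1 | e1 | r2 | e3 | r3 | e2 | r4 | ik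
deriving DecidableEq

open IntersectItem in
instance : Fintype IntersectItem :=
  .ofList [b, r1, e1, r2, e3, r3, e2, r4, ik] (by intro x; cases x <;> decide)

open C10 in
def IntersectItem.classOf : IntersectItem → C10
  | b => B | r1 => R1 | e1 => E1 | r2 => R2 | e3 => E3 | r3 => R3 | e2 => E2
  | r4 => R4 | ik => Ik

open IntersectItem in
def IntersectItem.Adj (i j : IntersectItem) : Prop :=
  (i, j) ∈ edges ∨ (j, i) ∈ edges
where edges : List (IntersectItem × IntersectItem) :=
  [(r1, b), (r1, e1), (r2, e1), (r2, e3), (r3, e1), (r3, e2), (r4, e2), (r4, e3), (r4, ik)]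

instance : DecidableRel IntersectItem.Adj := fun _ _ => by
  unfold IntersectItem.Adj; infer_instance

@[reducible]
def intersectSkeleton : Skeleton S10 where
  Item := IntersectItem
  classOf := IntersectItem.classOf
  adj := IntersectItem.Adj
  adj_symm := by decide
  adj_alt := by unfold S10; decide
  card_one := by unfold S10; decide
  rel_unique := by unfold S10; decide
  rel_total := by unfold S10; decide

open IntersectItem in
theorem exists_intersect_witness : ∃ (σ : Skeleton S10) (b : σ.Item), σ.classOf b = C10.B ∧
    (σ.tfull P10 b ∩ σ.tfull P10' b).Nonempty := by
  refine ⟨intersectSkeleton, b, rfl, ik, ?_, ?_⟩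
  · exact intersectSkeleton.getLast_mem_tfull_of_isChain S10_card_eq_one
      (w := [r1, e1, r3, e2, r4, ik]) rfl (by decide) (by decide)
  · exact intersectSkeleton.getLast_mem_tfull_of_isChain S10_card_eq_one
      (w := [r1, e1, r2, e3, r4, ik]) rfl (by decide) (by decide)

theorem tfull_R10_inter_tfull_P10'_eq_empty (σ : Skeleton S10) {b ij : σ.Item}
    (hij : ij ∈ σ.tfull Q10 b) : σ.tfull R10 ij ∩ σ.tfull P10' b = ∅ := by
  refine Set.eq_empty_of_forall_notMem fun z ⟨hzR, hzP'⟩ => ?_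
  have hzQ : z ∈ σ.tset Q10 b 6 :=
    σ.tset_congr (P := P10') (k := 6) (fun m hm => by interval_cases m <;> rfl) ▸ hzP'
  obtain ⟨-, ⟨w, hw, hzw⟩, -⟩ := (σ.mem_tset_succ).1 (hzR : z ∈ σ.tset R10 ij (9 + 1))
  obtain ⟨-, ⟨r, hr, hzr⟩, -⟩ := (σ.mem_tset_succ).1 (hzQ : z ∈ σ.tset Q10 b (5 + 1))
  have hwr : w = r := σ.eq_of_adj_of_classOf_eq S10_card_eq_one hzw hzr
    (Option.some.inj (((σ.mem_tset_succ).1 hw).1.symm.trans ((σ.mem_tset_succ).1 hr).1))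
  obtain ⟨v, hv⟩ := σ.tset_nonempty_of_le ⟨w, hw⟩ (show 3 ≤ 9 by omega)
  have hvQ : v ∈ σ.tset Q10 b 5 := σ.mem_tset_of_mem_tset_reverse S10_card_eq_one (n := 8) hij
    (by omega) (fun t ht => by interval_cases t <;> rfl) hv
  have hvr : v = r := σ.tset_subsingleton S10_card_eq_one Q10 b 5 hvQ hr
  exact σ.notMem_tset_of_mem_tset_succ hw (show 3 ≤ 8 by omega) (hwr ▸ hvr ▸ hv)

/-- co-intersectability is strictly stronger than the
conjunction of the RVE existence condition and intersectability: in the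
counterexample schema, (1) `P ∈ extend(Q,R)` is witnessed in some skeleton,
(2) `P` and `P′` are intersectable, but (3) `⟨Q,R,P,P′⟩` is not
co-intersectable. -/
theorem co_intersectability_strictly_stronger :
    (∃ (σ : Skeleton S10) (b : σ.Item), σ.classOf b = C10.B ∧
      ∃ ij ∈ σ.tfull Q10 b, (σ.tfull R10 ij ∩ σ.tfull P10 b).Nonempty) ∧
    (∃ (σ : Skeleton S10) (b : σ.Item), σ.classOf b = C10.B ∧
      (σ.tfull P10 b ∩ σ.tfull P10' b).Nonempty) ∧
    (∀ (σ : Skeleton S10) (b : σ.Item), σ.classOf b = C10.B →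
      ∀ ij ∈ σ.tfull Q10 b,
        σ.tfull R10 ij ∩ σ.tfull P10 b ∩ σ.tfull P10' b = ∅) := by
  refine ⟨exists_extend_witness, exists_intersect_witness, fun σ b _ ij hij => ?_⟩
  rw [← Set.subset_empty_iff, ← tfull_R10_inter_tfull_P10'_eq_empty σ hij]
  exact Set.inter_subset_inter_left _ Set.inter_subset_left
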